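/- If every vertex set S with |S| ≤ n/2 in an n-vertex graph H satisfies |N(S)| ≥ |S|/(2^8 (log n)^3), and H has a balanced separator of order at most tw(H)+1, and n ≥ 10^8 · 255/256, then tw(H) ≥ n / (2^10 (log n)^3). -/
import Mathlib


open Finset

/-- The external neighborhood of a vertex set `S`. -/
def nbrSet {V : Type*} (G : SimpleGraph V) (S : Set V) : Set V :=
  {v | v ∉ S ∧ ∃ u ∈ S, G.Adj u v}

/-- `(A, B)` is a separator of `G`: `A ∪ B = V` and no edge joins `A \ B` to `B \ A`. -/
def IsSeparator {V : Type*} [Fintype V] [DecidableEq V] (G : SimpleGraph V) (A B : Finset V) : Prop :=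
  A ∪ B = Finset.univ ∧ ∀ a ∈ A \ B, ∀ b ∈ B \ A, ¬ G.Adj a b

/-- A balanced separator: moreover `|A \ B|` and `|B \ A|` are at most `(2/3)|V|`. -/
def IsBalancedSeparator {V : Type*} [Fintype V] [DecidableEq V] (G : SimpleGraph V) (A B : Finset V) : Prop :=
  IsSeparator G A B ∧ 3 * (A \ B).card ≤ 2 * Fintype.card V ∧
    3 * (B \ A).card ≤ 2 * Fintype.card V

/-- `G` has a tree decomposition of width at most `k`. -/
def HasTreeDecompOfWidth {V : Type*} (G : SimpleGraph V) (k : ℕ) : Prop :=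
  ∃ (ι : Type) (T : SimpleGraph ι) (β : ι → Finset V),
    T.IsTree ∧
    (∀ v, ∃ i, v ∈ β i) ∧
    (∀ u v, G.Adj u v → ∃ i, u ∈ β i ∧ v ∈ β i) ∧
    (∀ v, (SimpleGraph.induce {i | v ∈ β i} T).Connected) ∧
    (∀ i, (β i).card ≤ k + 1)

/-- The tree-width of `G`. -/
noncomputable def treewidth {V : Type*} (G : SimpleGraph V) : ℕ :=
  sInf {k | HasTreeDecompOfWidth G k}

/-- A realization of `H` as a depth-`r` minor of `G`: pairwise disjoint branch sets
`S w ⊆ V(G)`, each connected of radius at most `r` (witnessed by a center and walks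
staying inside the branch set), such that every edge of `H` is realized by an edge
of `G` between the corresponding branch sets. -/
structure DepthMinorRealization {V W : Type*} (r : ℕ) (G : SimpleGraph V)
    (H : SimpleGraph W) where
  S : W → Set V
  disj : ∀ w w', w ≠ w' → Disjoint (S w) (S w')
  center : W → V
  center_mem : ∀ w, center w ∈ S w
  radius : ∀ w, ∀ v ∈ S w, ∃ p : G.Walk (center w) v, p.length ≤ r ∧
    ∀ x ∈ p.support, x ∈ S w
  adj : ∀ w w', H.Adj w w' → ∃ a ∈ S w, ∃ b ∈ S w', G.Adj a b

/-- The average degree `2|E|/|V|` of a finite graph. -/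
noncomputable def avgDeg {W : Type*} [Fintype W] (H : SimpleGraph W) : ℝ :=
  (∑ w : W, ({w' | H.Adj w w'}.ncard : ℝ)) / (Fintype.card W : ℝ)

/-- `v` is strongly `r`-reachable from `u` with respect to the linear order `L`. -/
def StronglyReachable {V : Type*} (G : SimpleGraph V) (L : LinearOrder V) (r : ℕ)
    (u v : V) : Prop :=
  L.le v u ∧ ∃ p : G.Walk u v, p.IsPath ∧ p.length ≤ r ∧
    ∀ w ∈ p.support, w ≠ u → w ≠ v → L.lt u w

/-- `v` is weakly `r`-reachable from `u` with respect to the linear order `L`. -/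
def WeaklyReachable {V : Type*} (G : SimpleGraph V) (L : LinearOrder V) (r : ℕ)
    (u v : V) : Prop :=
  L.le v u ∧ ∃ p : G.Walk u v, p.IsPath ∧ p.length ≤ r ∧
    ∀ w ∈ p.support, L.le v w

/-- The strong `r`-coloring number of `G`. -/
noncomputable def colNum {V : Type*} [Fintype V] (G : SimpleGraph V) (r : ℕ) : ℕ :=
  sInf {k | ∃ L : LinearOrder V, ∀ u, {v | StronglyReachable G L r u v}.ncard ≤ k}

/-- The weak `r`-coloring number of `G`. -/
noncomputable def wcolNum {V : Type*} [Fintype V] (G : SimpleGraph V) (r : ℕ) : ℕ :=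
  sInf {k | ∃ L : LinearOrder V, ∀ u, {v | WeaklyReachable G L r u v}.ncard ≤ k}

/-- `H` is (isomorphic to) a subgraph of `G`. -/
def IsSubgraphOf {W V : Type*} (H : SimpleGraph W) (G : SimpleGraph V) : Prop :=
  ∃ f : W ↪ V, ∀ a b, H.Adj a b → G.Adj (f a) (f b)

lemma aux_logb_le {x : ℝ} (k : ℕ) (hx : 0 < x) (h : x ≤ 2^k) : Real.logb 2 x ≤ k := by
  rw [Real.logb_le_iff_le_rpow (by norm_num) hx]
  rwa [Real.rpow_natCast]

lemma aux_le_logb {x : ℝ} (k : ℕ) (h : (2:ℝ)^k ≤ x) : (k:ℝ) ≤ Real.logb 2 x := by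
  rw [Real.le_logb_iff_rpow_le (by norm_num) (lt_of_lt_of_le (by positivity) h)]
  rwa [Real.rpow_natCast]

lemma aux_log_coarse {x : ℝ} (hx : 1 ≤ x) : Real.log x ≤ 6 * x ^ ((1:ℝ)/6) := by
  have hx0 : (0:ℝ) < x := by linarith
  have h1 : Real.log (x ^ ((1:ℝ)/6)) = (1/6) * Real.log x := Real.log_rpow hx0 _
  have h2 : Real.log (x ^ ((1:ℝ)/6)) ≤ x ^ ((1:ℝ)/6) - 1 :=
    Real.log_le_sub_one_of_pos (by positivity)
  nlinarith [Real.rpow_nonneg hx0.le ((1:ℝ)/6)]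

lemma aux_key3 {x : ℝ} (hx : (99609375:ℝ) ≤ x) : 3073 * (Real.logb 2 x)^3 ≤ x := by
  have hx0 : (0:ℝ) < x := by linarith
  have hL0 : 0 ≤ Real.logb 2 x := Real.logb_nonneg (by norm_num) (by linarith)
  rcases le_or_gt x (2^31) with h31 | h31
  · have hL : Real.logb 2 x ≤ 31 := aux_logb_le 31 hx0 h31
    nlinarith [pow_le_pow_left₀ hL0 hL 3]
  rcases le_or_gt x (2^42) with h42 | h42
  · have hL : Real.logb 2 x ≤ 42 := aux_logb_le 42 hx0 h42
    nlinarith [pow_le_pow_left₀ hL0 hL 3]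
  · have hcoarse : Real.log x ≤ 6 * x ^ ((1:ℝ)/6) := aux_log_coarse (by linarith)
    have hs : x ^ ((1:ℝ)/6) * x ^ ((1:ℝ)/6) * x ^ ((1:ℝ)/6) = Real.sqrt x := by
      rw [Real.sqrt_eq_rpow, ← Real.rpow_add hx0, ← Real.rpow_add hx0]
      norm_num
    have hsqrt : (2:ℝ)^21 ≤ Real.sqrt x := by
      rw [show ((2:ℝ)^21) = Real.sqrt ((2^21)^2) by rw [Real.sqrt_sq (by positivity)]]
      apply Real.sqrt_le_sqrt; nlinarith
    have hss : Real.sqrt x * Real.sqrt x = x := Real.mul_self_sqrt hx0.le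
    have hlog2 : (0.6931471803:ℝ) < Real.log 2 := Real.log_two_gt_d9
    have hlogx0 : 0 ≤ Real.log x := Real.log_nonneg (by linarith)
    have hy0 : (0:ℝ) ≤ x ^ ((1:ℝ)/6) := Real.rpow_nonneg hx0.le _
    have h3 : (Real.log x)^3 ≤ 216 * Real.sqrt x := by
      calc (Real.log x)^3 ≤ (6 * x ^ ((1:ℝ)/6))^3 := pow_le_pow_left₀ hlogx0 hcoarse 3
        _ = 216 * Real.sqrt x := by rw [← hs]; ring
    have hcube : Real.logb 2 x ^ 3 = (Real.log x)^3 / (Real.log 2)^3 := by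
      rw [Real.logb]; ring
    rw [hcube, ← mul_div_assoc, div_le_iff₀ (by positivity)]
    have hQ : (0.333:ℝ) ≤ (Real.log 2)^3 := by nlinarith [pow_le_pow_left₀ (by norm_num : (0:ℝ) ≤ 0.6931471803) hlog2.le 3]
    have hsx0 : (0:ℝ) ≤ Real.sqrt x := Real.sqrt_nonneg x
    nlinarith [mul_le_mul_of_nonneg_left hsqrt hsx0,
      mul_le_mul_of_nonneg_left hQ (mul_nonneg hsx0 hsx0),
      mul_le_mul_of_nonneg_right hsqrt hsx0]
lemma sep_key {V : Type*} [Fintype V] [DecidableEq V] (H : SimpleGraph V)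
    (hexp : ∀ S : Finset V, (S.card : ℝ) ≤ (Fintype.card V : ℝ) / 2 →
      (S.card : ℝ) / (2 ^ 8 * (Real.logb 2 (Fintype.card V)) ^ 3)
        ≤ ((nbrSet H ↑S).ncard : ℝ))
    (A B : Finset V) (hbal : IsBalancedSeparator H A B)
    (hle : (A \ B).card ≤ (B \ A).card)
    (hc : (0:ℝ) < 2 ^ 8 * (Real.logb 2 (Fintype.card V)) ^ 3) :
    (Fintype.card V : ℝ) ≤
      3 * (1 + 2 ^ 8 * (Real.logb 2 (Fintype.card V)) ^ 3) * ((A ∩ B).card : ℝ) := by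
  set n := Fintype.card V
  set c := 2 ^ 8 * (Real.logb 2 (n:ℕ)) ^ 3 with hcdef
  have huniv : A ∪ B = Finset.univ := hbal.1.1
  have hcard : (A \ B).card + (B \ A).card + (A ∩ B).card = n := by
    have h1 := Finset.card_union_add_card_inter A B
    have h2 := Finset.card_sdiff_add_card_inter A B
    have h3 := Finset.card_sdiff_add_card_inter B A
    rw [huniv, Finset.card_univ] at h1
    rw [Finset.inter_comm] at h3
    omega
  -- subset of neighborhood
  have hsub : nbrSet H ↑(A \ B) ⊆ ↑(A ∩ B) := by
    rintro v ⟨hvn, u, hu, huv⟩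
    simp only [Finset.coe_sdiff, Set.mem_diff, Finset.mem_coe] at hu
    have hvuniv : v ∈ A ∪ B := by rw [huniv]; exact Finset.mem_univ v
    rcases Finset.mem_union.1 hvuniv with hvA | hvB
    · by_cases hvB : v ∈ B
      · exact Finset.mem_coe.2 (Finset.mem_inter.2 ⟨hvA, hvB⟩)
      · exact absurd (by simp [nbrSet, Finset.mem_sdiff, hvA, hvB] : v ∈ (↑(A \ B) : Set V)) hvn
    · by_cases hvA : v ∈ A
      · exact Finset.mem_coe.2 (Finset.mem_inter.2 ⟨hvA, hvB⟩)
      · exact absurd huv (hbal.1.2 u (Finset.mem_sdiff.2 ⟨hu.1, hu.2⟩)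
          v (Finset.mem_sdiff.2 ⟨hvB, hvA⟩))
  have hncard : ((nbrSet H ↑(A \ B)).ncard : ℝ) ≤ ((A ∩ B).card : ℝ) := by
    have := Set.ncard_le_ncard hsub (Set.toFinite _)
    rw [Set.ncard_coe_finset] at this
    exact_mod_cast this
  have hhalf : ((A \ B).card : ℝ) ≤ (n : ℝ) / 2 := by
    have : 2 * (A \ B).card ≤ n := by omega
    have := (Nat.cast_le (α := ℝ)).2 this
    push_cast at this ⊢
    linarith
  have hexp' := (hexp (A \ B) hhalf).trans hncard
  rw [div_le_iff₀ hc] at hexp'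
  have hlow : (n : ℝ) ≤ 3 * ((A \ B).card : ℝ) + 3 * ((A ∩ B).card : ℝ) := by
    have h22 : 3 * (B \ A).card ≤ 2 * n := hbal.2.2
    have : n ≤ 3 * (A \ B).card + 3 * (A ∩ B).card := by omega
    exact_mod_cast this
  nlinarith [Nat.cast_nonneg (α := ℝ) (A ∩ B).card, hc.le]

theorem stmt_3' {V : Type*} [Fintype V] [DecidableEq V] (H : SimpleGraph V)
    (hexp : ∀ S : Finset V, (S.card : ℝ) ≤ (Fintype.card V : ℝ) / 2 →
      (S.card : ℝ) / (2 ^ 8 * (Real.logb 2 (Fintype.card V)) ^ 3)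
        ≤ ((nbrSet H ↑S).ncard : ℝ))
    (hsep : ∃ A B : Finset V, IsBalancedSeparator H A B ∧
      (A ∩ B).card ≤ treewidth H + 1)
    (hn : (10 ^ 8 : ℝ) * (255 / 256) ≤ (Fintype.card V : ℝ)) :
    (Fintype.card V : ℝ) / (2 ^ 10 * (Real.logb 2 (Fintype.card V)) ^ 3)
      ≤ (treewidth H : ℝ) := by
  obtain ⟨A, B, hbal, hABt⟩ := hsep
  have hn' : (99609375 : ℝ) ≤ (Fintype.card V : ℝ) := by norm_num at hn ⊢; linarith
  set n := Fintype.card V with hndef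
  set L := Real.logb 2 (n : ℕ) with hLdef
  have hL26 : (26 : ℝ) ≤ L := by
    have h226 : (2:ℝ)^26 ≤ (n:ℝ) := by
      calc (2:ℝ)^26 = 67108864 := by norm_num
        _ ≤ (n:ℝ) := by linarith
    have := aux_le_logb (x := (n:ℝ)) 26 h226
    simpa using this
  have hL0 : (0:ℝ) < L := by linarith
  have hc : (0:ℝ) < 2 ^ 8 * L ^ 3 := by positivity
  have hkey : (n : ℝ) ≤ 3 * (1 + 2 ^ 8 * L ^ 3) * ((A ∩ B).card : ℝ) := by
    rcases le_total (A \ B).card (B \ A).card with hle | hle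
    · exact sep_key H hexp A B hbal hle hc
    · have hbal' : IsBalancedSeparator H B A :=
        ⟨⟨by rw [Finset.union_comm]; exact hbal.1.1,
          fun b hb a ha hadj => hbal.1.2 a ha b hb hadj.symm⟩, hbal.2.2, hbal.2.1⟩
      have := sep_key H hexp B A hbal' hle hc
      rwa [Finset.inter_comm] at this
  have ht0 : (0:ℝ) ≤ (treewidth H : ℝ) := Nat.cast_nonneg _
  have hABt' : ((A ∩ B).card : ℝ) ≤ (treewidth H : ℝ) + 1 := by exact_mod_cast hABt
  have h1 : (n : ℝ) ≤ 3 * (1 + 2 ^ 8 * L ^ 3) * ((treewidth H : ℝ) + 1) := by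
    have h3c : (0:ℝ) ≤ 3 * (1 + 2 ^ 8 * L ^ 3) := by positivity
    calc (n:ℝ) ≤ 3 * (1 + 2 ^ 8 * L ^ 3) * ((A ∩ B).card : ℝ) := hkey
      _ ≤ 3 * (1 + 2 ^ 8 * L ^ 3) * ((treewidth H : ℝ) + 1) :=
          mul_le_mul_of_nonneg_left hABt' h3c
  have h2 : 3073 * L ^ 3 ≤ (n : ℝ) := aux_key3 hn'
  have hM : (17576 : ℝ) ≤ L ^ 3 := by nlinarith [pow_le_pow_left₀ (by norm_num : (0:ℝ) ≤ 26) hL26 3]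
  rw [div_le_iff₀ (by positivity)]
  nlinarith [mul_nonneg (by linarith : (0:ℝ) ≤ L ^ 3 - 17576) ht0, h1, h2, hM, ht0]

/-- lower bound on the tree-width of an expander (logs base 2). -/
theorem stmt_3 {V : Type*} [Fintype V] [DecidableEq V] (H : SimpleGraph V)
    (hexp : ∀ S : Finset V, (S.card : ℝ) ≤ (Fintype.card V : ℝ) / 2 →
      (S.card : ℝ) / (2 ^ 8 * (Real.logb 2 (Fintype.card V)) ^ 3)
        ≤ ((nbrSet H ↑S).ncard : ℝ))
    (hsep : ∃ A B : Finset V, IsBalancedSeparator H A B ∧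
      (A ∩ B).card ≤ treewidth H + 1)
    (hn : (10 ^ 8 : ℝ) * (255 / 256) ≤ (Fintype.card V : ℝ)) :
    (Fintype.card V : ℝ) / (2 ^ 10 * (Real.logb 2 (Fintype.card V)) ^ 3)
      ≤ (treewidth H : ℝ) :=
  stmt_3' H hexp hsep hn
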